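/- Let x̂_{k:N} ∈ S^(N−k+1) and let f_{k:N} be a non-degenerate policy belonging to 𝔓(x̂_{k:N}). Then for every j ∈ {k, …, N}: (1) μ_{j|j}(D̄_j) = 1; and (2) if q_j < 1, the probability measure ν_j defined by ν_j(A) = (1 − q_j)^(−1) ∫_A (1 − f_j) dμ_{j|j−1} satisfies ν_j(Ḏ_j) = 0. -/

import Mathlib

open MeasureTheory Filter
open scoped ENNReal NNReal Topology

noncomputable section

/-- The state space `S = ℝ² × [0, 2π)`. -/
abbrev S : Type := {x : ℝ × ℝ × ℝ // x.2.2 ∈ Set.Ico (0 : ℝ) (2 * Real.pi)}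

/-- The metric `d` on `S`. -/
noncomputable def dS (x y : S) : ℝ :=
  Real.sqrt ((x.1.1 - y.1.1) ^ 2 + (x.1.2.1 - y.1.2.1) ^ 2
    + 2 * (Real.cos x.1.2.2 - Real.cos y.1.2.2) ^ 2
    + 2 * (Real.sin x.1.2.2 - Real.sin y.1.2.2) ^ 2)

/-- The initial state `x₀ = (0,0,0)`. -/
def origin : S := ⟨(0, 0, 0), ⟨le_rfl, by positivity⟩⟩

/-- `κ` is a Markov kernel on `S`. -/
def IsMarkov (κ : S → Measure S) : Prop :=
  (∀ x, IsProbabilityMeasure (κ x)) ∧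
    ∀ A : Set S, MeasurableSet A → Measurable fun x => κ x A

/-- Continuity of a real-valued function with respect to the metric `dS`. -/
def DContinuous (g : S → ℝ) : Prop :=
  ∀ x : S, ∀ ε : ℝ, 0 < ε → ∃ δ : ℝ, 0 < δ ∧ ∀ y : S, dS x y < δ → |g y - g x| < ε

/-- Openness with respect to the metric `dS`. -/
def DOpen (O : Set S) : Prop :=
  ∀ x ∈ O, ∃ δ : ℝ, 0 < δ ∧ ∀ y : S, dS x y < δ → y ∈ O

/-- Assumption 1 on the kernel `κ`. -/
def Assumption1 (κ : S → Measure S) : Prop :=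
  (∀ A : Set S, MeasurableSet A → DContinuous fun x => (κ x A).toReal) ∧
    ∀ O : Set S, DOpen O → O.Nonempty → ∀ x : S, 0 < κ x O

/-- Auxiliary downward value recursion; the first argument is the number
`N + 1 - j` of remaining stages. -/
noncomputable def Jaux (κ : S → Measure S) (c' : ℕ → ℝ) (xhat : ℕ → S) :
    ℕ → ℕ → S → ℝ≥0∞
  | 0, _, _ => 0
  | m + 1, j, x =>
      min (ENNReal.ofReal (dS x (xhat j) ^ 2) + ∫⁻ y, Jaux κ c' xhat m (j + 1) y ∂(κ x))
        (ENNReal.ofReal (c' j))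

/-- The optimal cost-to-go `J*_j(x, x̂_{j:N})`. -/
noncomputable def JJ (κ : S → Measure S) (c' : ℕ → ℝ) (N : ℕ) (xhat : ℕ → S)
    (j : ℕ) (x : S) : ℝ≥0∞ :=
  Jaux κ c' xhat (N + 1 - j) j x

/-- `G_j(x, x̂_{j:N}) = ∫ J*_j(y, x̂_{j:N}) κ(x)(dy)`. -/
noncomputable def Gj (κ : S → Measure S) (c' : ℕ → ℝ) (N : ℕ) (xhat : ℕ → S)
    (j : ℕ) (x : S) : ℝ≥0∞ :=
  ∫⁻ y, JJ κ c' N xhat j y ∂(κ x)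

/-- `G(x̂_{k:N}) = G_k(x₀, x̂_{k:N})`. -/
noncomputable def Gtot (κ : S → Measure S) (c' : ℕ → ℝ) (k N : ℕ) (xhat : ℕ → S) : ℝ≥0∞ :=
  Gj κ c' N xhat k origin

/-- A randomized policy: a tuple of Borel measurable functions `f_j : S → [0,1]`. -/
def IsPolicy (k N : ℕ) (f : ℕ → S → ℝ≥0∞) : Prop :=
  ∀ j, k ≤ j → j ≤ N → Measurable (f j) ∧ ∀ x, f j x ≤ 1

/-- Auxiliary cost-to-go recursion for a policy; first argument is `N + 1 - j`. -/
noncomputable def Vaux (κ : S → Measure S) (c' : ℕ → ℝ) (xhat : ℕ → S)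
    (f : ℕ → S → ℝ≥0∞) : ℕ → ℕ → S → ℝ≥0∞
  | 0, _, _ => 0
  | m + 1, j, x =>
      f j x * (ENNReal.ofReal (dS x (xhat j) ^ 2) + ∫⁻ y, Vaux κ c' xhat f m (j + 1) y ∂(κ x))
        + (1 - f j x) * ENNReal.ofReal (c' j)

/-- The cost-to-go `V_j` of a policy `f` with estimates `x̂`. -/
noncomputable def VV (κ : S → Measure S) (c' : ℕ → ℝ) (N : ℕ) (xhat : ℕ → S)
    (f : ℕ → S → ℝ≥0∞) (j : ℕ) (x : S) : ℝ≥0∞ :=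
  Vaux κ c' xhat f (N + 1 - j) j x

/-- The total expected cost `C(f_{k:N}, x̂_{k:N})`. -/
noncomputable def Cost (κ : S → Measure S) (c' : ℕ → ℝ) (k N : ℕ) (xhat : ℕ → S)
    (f : ℕ → S → ℝ≥0∞) : ℝ≥0∞ :=
  ∫⁻ y, VV κ c' N xhat f k y ∂(κ origin)

/-- `f ∈ 𝔓(x̂_{k:N})`: `f` minimizes the cost over all randomized policies. -/
def inP (κ : S → Measure S) (c' : ℕ → ℝ) (k N : ℕ) (xhat : ℕ → S)
    (f : ℕ → S → ℝ≥0∞) : Prop :=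
  IsPolicy k N f ∧
    ∀ g : ℕ → S → ℝ≥0∞, IsPolicy k N g → Cost κ c' k N xhat f ≤ Cost κ c' k N xhat g

/-- `x̂ ∈ 𝔛(f_{k:N})`: the estimates minimize the cost for the policy `f`. -/
def inX (κ : S → Measure S) (c' : ℕ → ℝ) (k N : ℕ) (f : ℕ → S → ℝ≥0∞)
    (xhat : ℕ → S) : Prop :=
  ∀ yhat : ℕ → S, Cost κ c' k N xhat f ≤ Cost κ c' k N yhat f

/-- Conditioning a measure on "no transmission" at stage `j`. -/
noncomputable def condMeas (f : ℕ → S → ℝ≥0∞) (j : ℕ) (μ : Measure S) : Measure S :=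
  (∫⁻ x, f j x ∂μ)⁻¹ • μ.withDensity (f j)

/-- The predicted measures `μ_{j|j−1}`, by recursion on `j - k`. -/
noncomputable def mupredAux (κ : S → Measure S) (f : ℕ → S → ℝ≥0∞) (k : ℕ) :
    ℕ → Measure S
  | 0 => κ origin
  | n + 1 => (condMeas f (k + n) (mupredAux κ f k n)).bind κ

/-- `μ_{j|j−1}`. -/
noncomputable def mupred (κ : S → Measure S) (f : ℕ → S → ℝ≥0∞) (k j : ℕ) : Measure S :=
  mupredAux κ f k (j - k)

/-- `q_j = ∫ f_j dμ_{j|j−1}`. -/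
noncomputable def qq (κ : S → Measure S) (f : ℕ → S → ℝ≥0∞) (k j : ℕ) : ℝ≥0∞ :=
  ∫⁻ x, f j x ∂(mupred κ f k j)

/-- `μ_{j|j}`. -/
noncomputable def mucond (κ : S → Measure S) (f : ℕ → S → ℝ≥0∞) (k j : ℕ) : Measure S :=
  condMeas f j (mupred κ f k j)

/-- Non-degeneracy of a policy. -/
def NonDeg (κ : S → Measure S) (f : ℕ → S → ℝ≥0∞) (k N : ℕ) : Prop :=
  ∀ j, k ≤ j → j ≤ N → 0 < qq κ f k j

/-- The closed "no transmission" region `D̄_j`. -/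
noncomputable def Dbar (κ : S → Measure S) (c' : ℕ → ℝ) (N : ℕ) (xhat : ℕ → S)
    (j : ℕ) : Set S :=
  {x : S | ENNReal.ofReal (dS x (xhat j) ^ 2) + ∫⁻ y, JJ κ c' N xhat (j + 1) y ∂(κ x)
      ≤ ENNReal.ofReal (c' j)}

/-- The open "no transmission" region `Ḏ_j`. -/
noncomputable def Dund (κ : S → Measure S) (c' : ℕ → ℝ) (N : ℕ) (xhat : ℕ → S)
    (j : ℕ) : Set S :=
  {x : S | ENNReal.ofReal (dS x (xhat j) ^ 2) + ∫⁻ y, JJ κ c' N xhat (j + 1) y ∂(κ x)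
      < ENNReal.ofReal (c' j)}

/-- Hypothesis (H). -/
def HypH (κ : S → Measure S) (c' : ℕ → ℝ) (k N : ℕ) : Prop :=
  ∀ j, k ≤ j → j ≤ N → ∃ xhat : ℕ → S, (Dund κ c' N xhat j).Nonempty

/-- Weak convergence of measures on `(S, dS)`: tested against `dS`-continuous
bounded functions. -/
def WeakConvS (μl : ℕ → Measure S) (μ : Measure S) : Prop :=
  ∀ h : S → ℝ, DContinuous h → (∃ C : ℝ, ∀ x, |h x| ≤ C) →
    Tendsto (fun l => ∫ x, h x ∂(μl l)) atTop (𝓝 (∫ x, h x ∂μ))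

/-- Convergence of a sequence of (non-degenerate) policies to a policy. -/
def PolConv (κ : S → Measure S) (k N : ℕ) (g : ℕ → ℕ → S → ℝ≥0∞)
    (f : ℕ → S → ℝ≥0∞) : Prop :=
  ∀ j, k ≤ j → j ≤ N →
    WeakConvS (fun l => mucond κ (g l) k j) (mucond κ f k j) ∧
      Tendsto (fun l => qq κ (g l) k j) atTop (𝓝 (qq κ f k j))

/-!
The threshold policy that stays silent exactly on `D̄_j` has cost `∫ J*_k dκ(x₀)`, the least
possible value, because `J*_j ≤ V_j` for every policy. So an optimal policy has `V_k = J*_k`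
almost everywhere under `μ_{k|k-1}`. Where `f_j(x) ≠ 0`, the equality
`f_j (d² + ∫ V_{j+1}) + (1 - f_j) c'_j = min (d² + ∫ J*_{j+1}) c'_j` forces
`∫ V_{j+1} dκ(x) = ∫ J*_{j+1} dκ(x)`, hence `V_{j+1} = J*_{j+1}` almost everywhere under
`κ(x)`; integrating against `μ_{j|j}` propagates the equality to `μ_{j+1|j}`. Finally, the same
equality at stage `j` forces `f_j = 1` on `Ḏ_j` and `f_j = 0` off `D̄_j`.
-/

section ConvexCombination

variable {f a b c : ℝ≥0∞}

lemma convexComb_self (hf : f ≤ 1) : f * a + (1 - f) * a = a := by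
  rw [← add_mul, add_tsub_cancel_of_le hf, one_mul]

lemma min_le_convexComb (hf : f ≤ 1) : min a c ≤ f * a + (1 - f) * c :=
  calc min a c = f * min a c + (1 - f) * min a c := (convexComb_self hf).symm
    _ ≤ f * a + (1 - f) * c := by gcongr <;> simp

lemma convexComb_eq_min_of_le (hf : f ≤ 1) (hab : a ≤ b)
    (h : f * b + (1 - f) * c = min a c) : f * a + (1 - f) * c = min a c :=
  le_antisymm (h ▸ by gcongr) (min_le_convexComb hf)

lemma eq_of_convexComb_eq_min (hf : f ≤ 1) (hf0 : f ≠ 0) (hc : c ≠ ∞) (hab : a ≤ b)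
    (h : f * b + (1 - f) * c = min a c) : b = a := by
  have hfa := convexComb_eq_min_of_le hf hab h
  rw [← hfa, ENNReal.add_left_inj (ENNReal.mul_ne_top (by simp) hc)] at h
  exact (ENNReal.mul_right_inj hf0 (ne_top_of_le_ne_top ENNReal.one_ne_top hf)).1 h

lemma eq_one_of_convexComb_eq_min (hf : f ≤ 1) (ha : a ≠ ∞) (hab : a ≤ b)
    (h : f * b + (1 - f) * c = min a c) (hac : a < c) : f = 1 := by
  have hfa := convexComb_eq_min_of_le hf hab h
  rw [min_eq_left hac.le] at hfa
  nth_rw 2 [← convexComb_self hf (a := a)] at hfa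
  rw [ENNReal.add_right_inj (ENNReal.mul_ne_top (ne_top_of_le_ne_top ENNReal.one_ne_top hf) ha)]
    at hfa
  by_contra hf1
  have h1f : 1 - f ≠ 0 := (tsub_pos_of_lt (lt_of_le_of_ne hf hf1)).ne'
  exact hac.ne ((ENNReal.mul_right_inj h1f (by simp)).1 hfa).symm

lemma eq_zero_of_convexComb_eq_min (hf : f ≤ 1) (hc : c ≠ ∞) (hab : a ≤ b)
    (h : f * b + (1 - f) * c = min a c) (hca : c < a) : f = 0 := by
  have hfa := convexComb_eq_min_of_le hf hab h
  rw [min_eq_right hca.le] at hfa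
  nth_rw 2 [← convexComb_self hf (a := c)] at hfa
  rw [ENNReal.add_left_inj (ENNReal.mul_ne_top (by simp) hc)] at hfa
  by_contra hf0
  exact hca.ne ((ENNReal.mul_right_inj hf0 (ne_top_of_le_ne_top ENNReal.one_ne_top hf)).1 hfa).symm

end ConvexCombination

section MeasureLemmas

variable {α β : Type*} [MeasurableSpace α] [MeasurableSpace β]

lemma isProbabilityMeasure_inv_lintegral_smul_withDensity {μ : Measure α} {g : α → ℝ≥0∞}
    (h0 : ∫⁻ x, g x ∂μ ≠ 0) (htop : ∫⁻ x, g x ∂μ ≠ ∞) :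
    IsProbabilityMeasure ((∫⁻ x, g x ∂μ)⁻¹ • μ.withDensity g) :=
  ⟨by simp [ENNReal.inv_mul_cancel h0 htop]⟩

lemma ae_smul_withDensity {μ : Measure α} {g : α → ℝ≥0∞} {p : α → Prop} (c : ℝ≥0∞)
    (hg : AEMeasurable g μ) (h : ∀ᵐ x ∂μ, g x ≠ 0 → p x) : ∀ᵐ x ∂(c • μ.withDensity g), p x :=
  Measure.ae_smul_measure ((ae_withDensity_iff' hg).2 h) c

lemma ae_bind_of_ae_ae {ν : Measure α} {κ : α → Measure β} {p : β → Prop}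
    (hκ : AEMeasurable κ ν) (hp : MeasurableSet {y | p y}) (h : ∀ᵐ x ∂ν, ∀ᵐ y ∂κ x, p y) :
    ∀ᵐ y ∂ν.bind κ, p y := by
  rw [ae_iff, ← Set.compl_ofPred, Measure.bind_apply hp.compl hκ]
  exact (lintegral_congr_ae (h.mono fun x hx => ae_iff.1 hx)).trans lintegral_zero

end MeasureLemmas

lemma backward_induction {N : ℕ} {P : ℕ → Prop} (h_lt : ∀ j, N < j → P j)
    (h_le : ∀ j ≤ N, P (j + 1) → P j) (j : ℕ) : P j := by
  induction hm : N + 1 - j generalizing j with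
  | zero => exact h_lt j (by omega)
  | succ m ih => exact h_le j (by omega) (ih (j + 1) (by omega))

def silentCost (κ : S → Measure S) (c' : ℕ → ℝ) (N : ℕ) (xhat : ℕ → S) (j : ℕ) (x : S) :
    ℝ≥0∞ :=
  ENNReal.ofReal (dS x (xhat j) ^ 2) + ∫⁻ y, JJ κ c' N xhat (j + 1) y ∂(κ x)

def thresholdPolicy (κ : S → Measure S) (c' : ℕ → ℝ) (N : ℕ) (xhat : ℕ → S) :
    ℕ → S → ℝ≥0∞ :=
  fun j => (Dbar κ c' N xhat j).indicator 1

section Recursion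

variable {κ : S → Measure S} {c' : ℕ → ℝ} {N : ℕ} {xhat : ℕ → S} {f : ℕ → S → ℝ≥0∞}
  {j : ℕ} {x : S}

lemma JJ_of_lt (h : N < j) : JJ κ c' N xhat j x = 0 := by
  rw [JJ, Nat.sub_eq_zero_of_le h, Jaux]

lemma JJ_of_le (h : j ≤ N) :
    JJ κ c' N xhat j x = min (silentCost κ c' N xhat j x) (ENNReal.ofReal (c' j)) := by
  simp only [JJ, silentCost, show N + 1 - j = N - j + 1 by omega,
    show N + 1 - (j + 1) = N - j by omega, Jaux]

lemma VV_of_lt (h : N < j) : VV κ c' N xhat f j x = 0 := by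
  rw [VV, Nat.sub_eq_zero_of_le h, Vaux]

lemma VV_of_le (h : j ≤ N) :
    VV κ c' N xhat f j x = f j x * (ENNReal.ofReal (dS x (xhat j) ^ 2)
      + ∫⁻ y, VV κ c' N xhat f (j + 1) y ∂(κ x)) + (1 - f j x) * ENNReal.ofReal (c' j) := by
  simp only [VV, show N + 1 - j = N - j + 1 by omega, show N + 1 - (j + 1) = N - j by omega, Vaux]

lemma JJ_le_ofReal : JJ κ c' N xhat j x ≤ ENNReal.ofReal (c' j) := by
  rcases le_or_gt j N with h | h
  · exact (JJ_of_le h).trans_le (min_le_right _ _)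
  · simp [JJ_of_lt h]

lemma lintegral_JJ_ne_top (μ : Measure S) [IsFiniteMeasure μ] :
    ∫⁻ y, JJ κ c' N xhat j y ∂μ ≠ ∞ :=
  ne_top_of_le_ne_top (by simp [ENNReal.mul_eq_top])
    (lintegral_mono fun _ => JJ_le_ofReal (c' := c') (j := j))

lemma silentCost_ne_top [IsFiniteMeasure (κ x)] : silentCost κ c' N xhat j x ≠ ∞ :=
  ENNReal.add_ne_top.2 ⟨ENNReal.ofReal_ne_top, lintegral_JJ_ne_top _⟩

lemma JJ_le_VV {k : ℕ} (hf : IsPolicy k N f) (hkj : k ≤ j) (x : S) :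
    JJ κ c' N xhat j x ≤ VV κ c' N xhat f j x := by
  induction j using backward_induction (N := N) generalizing x with
  | h_lt j hj => simp [JJ_of_lt hj, VV_of_lt hj]
  | h_le j hjN ih =>
    rw [JJ_of_le hjN, VV_of_le hjN]
    calc min (silentCost κ c' N xhat j x) (ENNReal.ofReal (c' j))
        ≤ f j x * silentCost κ c' N xhat j x + (1 - f j x) * ENNReal.ofReal (c' j) :=
          min_le_convexComb ((hf j hkj hjN).2 x)
      _ ≤ _ := by
          unfold silentCost
          gcongr with y
          exact ih (by omega) y

lemma VV_thresholdPolicy (j : ℕ) :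
    VV κ c' N xhat (thresholdPolicy κ c' N xhat) j = JJ κ c' N xhat j := by
  induction j using backward_induction (N := N) with
  | h_lt j hj => funext x; rw [JJ_of_lt hj, VV_of_lt hj]
  | h_le j hjN ih =>
    funext x
    rw [JJ_of_le hjN, VV_of_le hjN, ih, ← silentCost]
    by_cases hx : x ∈ Dbar κ c' N xhat j
    · have hle : silentCost κ c' N xhat j x ≤ ENNReal.ofReal (c' j) := hx
      simp [thresholdPolicy, hx, min_eq_left hle]
    · have hlt : ¬silentCost κ c' N xhat j x ≤ ENNReal.ofReal (c' j) := hx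
      simp [thresholdPolicy, hx, min_eq_right (not_le.1 hlt).le]

lemma Cost_thresholdPolicy (k : ℕ) :
    Cost κ c' k N xhat (thresholdPolicy κ c' N xhat) = ∫⁻ y, JJ κ c' N xhat k y ∂(κ origin) := by
  rw [Cost, VV_thresholdPolicy]

end Recursion

lemma measurable_ofReal_dS_sq (z : S) : Measurable fun x => ENNReal.ofReal (dS x z ^ 2) := by
  unfold dS
  fun_prop

section Measurability

variable {κ : S → Measure S} (hκ : IsMarkov κ) {c' : ℕ → ℝ} {N : ℕ} {xhat : ℕ → S}
  {f : ℕ → S → ℝ≥0∞}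
include hκ

lemma IsMarkov.measurable : Measurable κ :=
  Measure.measurable_of_measurable_coe _ hκ.2

lemma IsMarkov.measurable_lintegral {g : S → ℝ≥0∞} (hg : Measurable g) :
    Measurable fun x => ∫⁻ y, g y ∂(κ x) :=
  (Measure.measurable_lintegral hg).comp hκ.measurable

lemma measurable_JJ (j : ℕ) : Measurable (JJ κ c' N xhat j) := by
  induction j using backward_induction (N := N) with
  | h_lt j hj => rw [show JJ κ c' N xhat j = _ from funext fun _ => JJ_of_lt hj]; fun_prop
  | h_le j hjN ih =>
    rw [show JJ κ c' N xhat j = _ from funext fun _ => JJ_of_le hjN]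
    unfold silentCost
    exact ((measurable_ofReal_dS_sq _).add (hκ.measurable_lintegral ih)).min measurable_const

lemma measurable_silentCost (j : ℕ) : Measurable (silentCost κ c' N xhat j) :=
  (measurable_ofReal_dS_sq _).add (hκ.measurable_lintegral (measurable_JJ hκ _))

lemma measurableSet_Dbar (j : ℕ) : MeasurableSet (Dbar κ c' N xhat j) :=
  measurableSet_le (measurable_silentCost hκ j) measurable_const

lemma measurable_VV {k : ℕ} (hf : IsPolicy k N f) (j : ℕ) (hkj : k ≤ j) :
    Measurable (VV κ c' N xhat f j) := by
  induction j using backward_induction (N := N) with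
  | h_lt j hj => rw [show VV κ c' N xhat f j = _ from funext fun _ => VV_of_lt hj]; fun_prop
  | h_le j hjN ih =>
    have hfj := (hf j hkj hjN).1
    rw [show VV κ c' N xhat f j = _ from funext fun _ => VV_of_le hjN]
    exact (hfj.mul ((measurable_ofReal_dS_sq _).add (hκ.measurable_lintegral (ih (by omega))))).add
      ((measurable_const.sub hfj).mul measurable_const)

lemma isPolicy_thresholdPolicy (k : ℕ) : IsPolicy k N (thresholdPolicy κ c' N xhat) :=
  fun j _ _ => ⟨measurable_one.indicator (measurableSet_Dbar hκ j),
    fun _ => Set.indicator_le_self' (fun _ _ => zero_le_one) _⟩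

end Measurability

section Policy

variable {κ : S → Measure S} {c' : ℕ → ℝ} {k N : ℕ} {xhat : ℕ → S} {f : ℕ → S → ℝ≥0∞}
  {j : ℕ} {x : S}

lemma mupred_self : mupred κ f k k = κ origin := by
  rw [mupred, Nat.sub_self, mupredAux]

lemma mupred_succ (hkj : k ≤ j) : mupred κ f k (j + 1) = (mucond κ f k j).bind κ := by
  rw [mupred, show j + 1 - k = j - k + 1 by omega, mupredAux, Nat.add_sub_cancel' hkj]
  rfl

lemma isProbabilityMeasure_mucond [IsProbabilityMeasure (mupred κ f k j)] (hfj : ∀ x, f j x ≤ 1)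
    (hq : qq κ f k j ≠ 0) : IsProbabilityMeasure (mucond κ f k j) := by
  have hq_le : qq κ f k j ≤ 1 := (lintegral_mono hfj).trans_eq (by simp)
  exact isProbabilityMeasure_inv_lintegral_smul_withDensity hq
    (ne_top_of_le_ne_top ENNReal.one_ne_top hq_le)

lemma isProbabilityMeasure_mupred (hκ : IsMarkov κ) (hf : IsPolicy k N f) (hnd : NonDeg κ f k N)
    (hkj : k ≤ j) (hjN : j ≤ N) : IsProbabilityMeasure (mupred κ f k j) := by
  induction j, hkj using Nat.le_induction with
  | base => rw [mupred_self]; exact hκ.1 origin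
  | succ j hkj ih =>
    have := ih (by omega)
    have := isProbabilityMeasure_mucond (hf j hkj (by omega)).2 (hnd j hkj (by omega)).ne'
    rw [mupred_succ hkj]
    exact isProbabilityMeasure_bind hκ.measurable.aemeasurable (ae_of_all _ hκ.1)

lemma convexComb_eq_min_of_JJ_eq_VV (hjN : j ≤ N) (h : JJ κ c' N xhat j x = VV κ c' N xhat f j x) :
    f j x * (ENNReal.ofReal (dS x (xhat j) ^ 2) + ∫⁻ y, VV κ c' N xhat f (j + 1) y ∂(κ x))
      + (1 - f j x) * ENNReal.ofReal (c' j)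
      = min (silentCost κ c' N xhat j x) (ENNReal.ofReal (c' j)) :=
  (VV_of_le hjN).symm.trans (h.symm.trans (JJ_of_le hjN))

lemma silentCost_le (hf : IsPolicy k N f) (hkj : k ≤ j) :
    silentCost κ c' N xhat j x
      ≤ ENNReal.ofReal (dS x (xhat j) ^ 2) + ∫⁻ y, VV κ c' N xhat f (j + 1) y ∂(κ x) := by
  unfold silentCost
  gcongr with y
  exact JJ_le_VV hf (by omega) y

lemma lintegral_VV_succ_eq_of_JJ_eq_VV (hf : IsPolicy k N f) (hkj : k ≤ j) (hjN : j ≤ N)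
    (h : JJ κ c' N xhat j x = VV κ c' N xhat f j x) (hfx : f j x ≠ 0) :
    ∫⁻ y, VV κ c' N xhat f (j + 1) y ∂(κ x) = ∫⁻ y, JJ κ c' N xhat (j + 1) y ∂(κ x) :=
  (ENNReal.add_right_inj ENNReal.ofReal_ne_top).1 <|
    eq_of_convexComb_eq_min ((hf j hkj hjN).2 x) hfx ENNReal.ofReal_ne_top (silentCost_le hf hkj)
      (convexComb_eq_min_of_JJ_eq_VV hjN h)

variable (hκ : IsMarkov κ)
include hκ

lemma ae_JJ_eq_VV_self (hP : inP κ c' k N xhat f) :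
    JJ κ c' N xhat k =ᵐ[mupred κ f k k] VV κ c' N xhat f k := by
  have := hκ.1 origin
  rw [mupred_self]
  refine ae_eq_of_ae_le_of_lintegral_le (ae_of_all _ (JJ_le_VV hP.1 le_rfl))
    (lintegral_JJ_ne_top _) (measurable_VV hκ hP.1 k le_rfl).aemeasurable ?_
  calc ∫⁻ y, VV κ c' N xhat f k y ∂(κ origin) = Cost κ c' k N xhat f := rfl
    _ ≤ Cost κ c' k N xhat (thresholdPolicy κ c' N xhat) :=
      hP.2 _ (isPolicy_thresholdPolicy hκ k)
    _ = ∫⁻ y, JJ κ c' N xhat k y ∂(κ origin) := Cost_thresholdPolicy k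

lemma ae_JJ_eq_VV_succ (hf : IsPolicy k N f) (hkj : k ≤ j) (hjN : j ≤ N)
    (h : JJ κ c' N xhat j =ᵐ[mupred κ f k j] VV κ c' N xhat f j) :
    JJ κ c' N xhat (j + 1) =ᵐ[mupred κ f k (j + 1)] VV κ c' N xhat f (j + 1) := by
  have hV : Measurable (VV κ c' N xhat f (j + 1)) := measurable_VV hκ hf (j + 1) (by omega)
  rw [mupred_succ hkj]
  refine ae_bind_of_ae_ae hκ.measurable.aemeasurable
    (measurableSet_eq_fun (measurable_JJ hκ _) hV) ?_
  refine ae_smul_withDensity _ (hf j hkj hjN).1.aemeasurable ?_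
  filter_upwards [h] with x hx hfx
  have := hκ.1 x
  exact ae_eq_of_ae_le_of_lintegral_le (ae_of_all _ (JJ_le_VV hf (by omega)))
    (lintegral_JJ_ne_top _) hV.aemeasurable (lintegral_VV_succ_eq_of_JJ_eq_VV hf hkj hjN hx hfx).le

lemma ae_JJ_eq_VV (hP : inP κ c' k N xhat f) (hkj : k ≤ j) (hjN : j ≤ N) :
    JJ κ c' N xhat j =ᵐ[mupred κ f k j] VV κ c' N xhat f j := by
  induction j, hkj using Nat.le_induction with
  | base => exact ae_JJ_eq_VV_self hκ hP
  | succ j hkj ih => exact ae_JJ_eq_VV_succ hκ hP.1 hkj (by omega) (ih (by omega))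

lemma ae_eq_one_of_mem_Dund (hP : inP κ c' k N xhat f) (hkj : k ≤ j) (hjN : j ≤ N) :
    ∀ᵐ x ∂(mupred κ f k j), x ∈ Dund κ c' N xhat j → f j x = 1 := by
  filter_upwards [ae_JJ_eq_VV hκ hP hkj hjN] with x hx hmem
  have := hκ.1 x
  exact eq_one_of_convexComb_eq_min ((hP.1 j hkj hjN).2 x) silentCost_ne_top
    (silentCost_le hP.1 hkj) (convexComb_eq_min_of_JJ_eq_VV hjN hx) hmem

lemma ae_eq_zero_of_notMem_Dbar (hP : inP κ c' k N xhat f) (hkj : k ≤ j) (hjN : j ≤ N) :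
    ∀ᵐ x ∂(mupred κ f k j), x ∉ Dbar κ c' N xhat j → f j x = 0 := by
  filter_upwards [ae_JJ_eq_VV hκ hP hkj hjN] with x hx hmem
  exact eq_zero_of_convexComb_eq_min ((hP.1 j hkj hjN).2 x) ENNReal.ofReal_ne_top
    (silentCost_le hP.1 hkj) (convexComb_eq_min_of_JJ_eq_VV hjN hx) (not_le.1 hmem)

end Policy

theorem optimal_policy_supported_on_decision_sets_general (κ : S → Measure S)
    (hκ : IsMarkov κ)
    (k N : ℕ) (c' : ℕ → ℝ)
    (xhat : ℕ → S) (f : ℕ → S → ℝ≥0∞) (hnd : NonDeg κ f k N)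
    (hP : inP κ c' k N xhat f) :
    ∀ j, k ≤ j → j ≤ N →
      mucond κ f k j (Dbar κ c' N xhat j) = 1 ∧
      (qq κ f k j < 1 →
        ((1 - qq κ f k j)⁻¹ •
            (mupred κ f k j).withDensity (fun x => 1 - f j x))
          (Dund κ c' N xhat j) = 0) := by
  intro j hkj hjN
  have hfj := hP.1 j hkj hjN
  have := isProbabilityMeasure_mupred hκ hP.1 hnd hkj hjN
  have := isProbabilityMeasure_mucond hfj.2 (hnd j hkj hjN).ne'
  refine ⟨?_, fun _ => ?_⟩
  · rw [← measure_univ (μ := mucond κ f k j),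
      ← ae_mem_iff_measure_eq (measurableSet_Dbar hκ j).nullMeasurableSet]
    refine ae_smul_withDensity _ hfj.1.aemeasurable ?_
    filter_upwards [ae_eq_zero_of_notMem_Dbar hκ hP hkj hjN] with x hx hf0
    exact not_not.1 (mt hx hf0)
  · refine measure_eq_zero_iff_ae_notMem.2
      (ae_smul_withDensity _ (measurable_const.sub hfj.1).aemeasurable ?_)
    filter_upwards [ae_eq_one_of_mem_Dund hκ hP hkj hjN] with x hx h1f hmem
    exact h1f (by rw [hx hmem, tsub_self])

/-- If a non-degenerate policy `f` belongs to `𝔓(x̂_{k:N})`, then (1) the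
conditional measure `μ_{j|j}` is concentrated on `D̄_j`, and (2) when `q_j < 1`,
the conditional measure given a transmission at time `j` assigns measure zero
to `Ḏ_j`. -/
theorem optimal_policy_supported_on_decision_sets (κ : S → Measure S)
    (hκ : IsMarkov κ)
    (k N : ℕ) (hkN : k ≤ N) (c' : ℕ → ℝ) (hc' : ∀ j, k ≤ j → j ≤ N → 0 < c' j)
    (xhat : ℕ → S) (f : ℕ → S → ℝ≥0∞) (hnd : NonDeg κ f k N)
    (hP : inP κ c' k N xhat f) :
    ∀ j, k ≤ j → j ≤ N →
      mucond κ f k j (Dbar κ c' N xhat j) = 1 ∧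
      (qq κ f k j < 1 →
        ((1 - qq κ f k j)⁻¹ •
            (mupred κ f k j).withDensity (fun x => 1 - f j x))
          (Dund κ c' N xhat j) = 0) :=
  optimal_policy_supported_on_decision_sets_general κ hκ k N c' xhat f hnd hP

end
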